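/- arXiv:2305.04893 — 5 statements merged into one kernel-verified Lean document; each statement's English description precedes it below -/
import Mathlib

section
/- Let K be a nonempty compact convex subset of a Hausdorff locally convex topological vector space, and let f : K → ℝ be upper semicontinuous and quasiconvex on K. Then f attains its maximum over K at some extreme point of K. -/
def SemiExtremal {V : Type*} [AddCommGroup V] [Module ℝ V] (K A : Set V) : Prop :=
  ∀ ⦃x⦄, x ∈ K → ∀ ⦃y⦄, y ∈ K → x ≠ y →
    (openSegment ℝ x y ∩ A).Nonempty → x ∈ A ∨ y ∈ A

section Helpers
variable {V : Type*} [AddCommGroup V] [Module ℝ V]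

private lemma combo_line (e d : V) (p q a c : ℝ) :
    p • (e + a • d) + q • (e + c • d) = (p + q) • e + (p * a + q * c) • d := by
  simp only [smul_add, smul_smul, add_smul]
  abel

private lemma line_inj {e d : V} (hd : d ≠ 0) {s t : ℝ} (h : e + s • d = e + t • d) : s = t := by
  have h1 : s • d = t • d := by
    have := congrArg (fun z => z - e) h
    simpa [add_sub_cancel_left] using this
  have h2 : (s - t) • d = 0 := by rw [sub_smul, h1, sub_self]
  rcases smul_eq_zero.mp h2 with h3 | h3
  · linarith [sub_eq_zero.mp h3]
  · exact absurd h3 hd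

private lemma line_openSeg {e d : V} {a b c : ℝ} (hab : a < b) (hbc : b < c) :
    e + b • d ∈ openSegment ℝ (e + a • d) (e + c • d) := by
  have hca : (0:ℝ) < c - a := by linarith
  have hcb : (0:ℝ) < c - b := by linarith
  have hba : (0:ℝ) < b - a := by linarith
  refine ⟨(c - b) / (c - a), (b - a) / (c - a), by positivity, by positivity, ?_, ?_⟩
  · field_simp; ring
  · rw [combo_line]
    have h1 : (c - b) / (c - a) + (b - a) / (c - a) = 1 := by field_simp; ring
    have h2 : (c - b) / (c - a) * a + (b - a) / (c - a) * c = b := by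
      field_simp; ring
    rw [h1, h2, one_smul]

private lemma line_openSeg' {e d : V} {a c : ℝ} (ha : a < 0) (hc : 0 < c) :
    e ∈ openSegment ℝ (e + a • d) (e + c • d) := by
  have := line_openSeg (e := e) (d := d) ha hc
  simpa using this

private lemma openSeg_on_line {e d : V} (hd : d ≠ 0) {p q τ : ℝ}
    (h : e + τ • d ∈ openSegment ℝ (e + p • d) (e + q • d)) (hpq : p ≠ q) :
    (p < τ ∧ τ < q) ∨ (q < τ ∧ τ < p) := by
  obtain ⟨a, b, ha, hb, hab, hcombo⟩ := h
  rw [combo_line, hab, one_smul] at hcombo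
  have hτ : a * p + b * q = τ := line_inj hd hcombo
  have key1 : τ - p = b * (q - p) := by
    have haa : a = 1 - b := by linarith
    rw [← hτ, haa]; ring
  have key2 : q - τ = a * (q - p) := by
    have hbb : b = 1 - a := by linarith
    rw [← hτ, hbb]; ring
  rcases lt_or_gt_of_ne hpq with h1 | h1
  · left
    constructor
    · nlinarith [mul_pos hb (sub_pos.mpr h1)]
    · nlinarith [mul_pos ha (sub_pos.mpr h1)]
  · right
    constructor
    · nlinarith [mul_pos ha (sub_pos.mpr h1)]
    · nlinarith [mul_pos hb (sub_pos.mpr h1)]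

/-- If two points of an open segment representation lie on a line, so does the third. -/
private lemma third_on_line {e d x y z : V} (hz : z ∈ openSegment ℝ x y)
    (hx : ∃ t : ℝ, x = e + t • d) (hzl : ∃ t : ℝ, z = e + t • d) :
    ∃ t : ℝ, y = e + t • d := by
  obtain ⟨a, b, ha, hb, hab, hcombo⟩ := hz
  obtain ⟨tx, rfl⟩ := hx
  obtain ⟨tz, hzeq⟩ := hzl
  have hbne : b ≠ 0 := ne_of_gt hb
  have h1 : b • y = b • e + (tz - a * tx) • d := by
    have h2 : b • y = z - a • (e + tx • d) := by rw [← hcombo]; abel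
    rw [h2, hzeq]
    have hb1 : (1:ℝ) - a = b := by linarith
    calc (e + tz • d) - a • (e + tx • d)
        = (1 - a) • e + (tz - a * tx) • d := by
          simp only [smul_add, smul_smul, sub_smul, one_smul]; abel
      _ = b • e + (tz - a * tx) • d := by rw [hb1]
  refine ⟨(tz - a * tx) / b, ?_⟩
  have := congrArg (fun w => b⁻¹ • w) h1
  simpa [smul_smul, smul_add, inv_mul_cancel₀ hbne, div_eq_inv_mul] using this

private lemma seg_mem {K : Set V} (hKconv : Convex ℝ K) {e u : V} {a b t : ℝ}
    (hKa : e + a • u ∈ K) (hKb : e + b • u ∈ K) (hat : a ≤ t) (htb : t ≤ b) :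
    e + t • u ∈ K := by
  rcases eq_or_lt_of_le hat with rfl | hat'
  · exact hKa
  rcases eq_or_lt_of_le htb with rfl | htb'
  · exact hKb
  have hba : (0:ℝ) < b - a := by linarith
  have hbt : (0:ℝ) ≤ b - t := by linarith
  have hta : (0:ℝ) ≤ t - a := by linarith
  have hmem := hKconv hKa hKb (a := (b - t)/(b - a)) (b := (t - a)/(b - a))
    (by positivity) (by positivity) (by field_simp; ring)
  rw [combo_line] at hmem
  have h1 : (b - t) / (b - a) + (t - a) / (b - a) = 1 := by field_simp; ring
  have h2 : (b - t) / (b - a) * a + (t - a) / (b - a) * b = t := by field_simp; ring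
  rwa [h1, h2, one_smul] at hmem


end Helpers

section Top

variable {V : Type*} [AddCommGroup V] [Module ℝ V] [TopologicalSpace V]
  [IsTopologicalAddGroup V] [ContinuousSMul ℝ V] [T2Space V] [LocallyConvexSpace ℝ V]

set_option linter.unusedSectionVars false


/-- A continuous linear functional equal to 1 on `d₁` and 0 on `d₂`. -/
private lemma exists_dual_pair {d₁ d₂ : V}
    (h : ∀ c₁ c₂ : ℝ, c₁ • d₁ + c₂ • d₂ = 0 → c₁ = 0 ∧ c₂ = 0) :
    ∃ l : V →L[ℝ] ℝ, l d₁ = 1 ∧ l d₂ = 0 := by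
  have hd1 : d₁ ∉ (Submodule.span ℝ ({d₂} : Set V) : Set V) := by
    intro hmem
    obtain ⟨c, hc⟩ := Submodule.mem_span_singleton.mp hmem
    have := (h 1 (-c) (by rw [one_smul, neg_smul, ← hc]; abel)).1
    norm_num at this
  have hclosed : IsClosed ((Submodule.span ℝ ({d₂} : Set V)) : Set V) :=
    Submodule.closed_of_finiteDimensional _
  obtain ⟨l, u, hlt, hu⟩ := geometric_hahn_banach_closed_point
    (Submodule.span ℝ ({d₂} : Set V)).convex hclosed hd1
  have hu0 : 0 < u := by
    have := hlt 0 (Submodule.zero_mem _)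
    simpa using this
  have hl2 : l d₂ = 0 := by
    by_contra hne
    have hmem : ∀ r : ℝ, r * l d₂ < u := by
      intro r
      have : ((r • d₂ : V) : V) ∈ (Submodule.span ℝ ({d₂} : Set V) : Set V) :=
        Submodule.smul_mem _ _ (Submodule.mem_span_singleton_self _)
      simpa using hlt _ this
    have h1 := hmem ((u + 1) / l d₂)
    rw [div_mul_cancel₀ _ hne] at h1
    linarith
  have hl1 : 0 < l d₁ := lt_trans hu0 hu
  refine ⟨(l d₁)⁻¹ • l, ?_, ?_⟩
  · simp [inv_mul_cancel₀ (ne_of_gt hl1)]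
  · simp [hl2]

/-- A continuous linear functional equal to 1 on a nonzero vector. -/
private lemma exists_dual_single {d : V} (hd : d ≠ 0) : ∃ l : V →L[ℝ] ℝ, l d = 1 := by
  obtain ⟨l, hl⟩ := geometric_hahn_banach_point_point (show (0 : V) ≠ d from (Ne.symm hd))
  rw [map_zero] at hl
  refine ⟨(l d)⁻¹ • l, ?_⟩
  simp [inv_mul_cancel₀ (ne_of_gt hl)]

/-- The intersection of a compact convex set with a line is a (possibly degenerate) closed
segment in the parameter. -/
private lemma line_chord {K : Set V} (hKc : IsCompact K) (hKconv : Convex ℝ K)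
    {e d : V} (he : e ∈ K) (hd : d ≠ 0) :
    ∃ tm tp : ℝ, tm ≤ 0 ∧ 0 ≤ tp ∧ (∀ t : ℝ, e + t • d ∈ K ↔ t ∈ Set.Icc tm tp) := by
  obtain ⟨l, hl1⟩ := exists_dual_single hd
  set T : Set ℝ := {t : ℝ | e + t • d ∈ K} with hT
  have hcont : Continuous fun t : ℝ => e + t • d := by continuity
  have hTclosed : IsClosed T := hKc.isClosed.preimage hcont
  have hTne : (0 : ℝ) ∈ T := by simpa [hT] using he
  -- bound: image of K under l is bounded
  obtain ⟨Cu, hCu⟩ := (hKc.image l.continuous).bddAbove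
  obtain ⟨Cl, hCl⟩ := (hKc.image l.continuous).bddBelow
  have hTabove : BddAbove T := by
    refine ⟨Cu - l e, fun t ht => ?_⟩
    have : l (e + t • d) ≤ Cu := hCu (Set.mem_image_of_mem _ ht)
    simp only [map_add, map_smul, hl1, smul_eq_mul, mul_one] at this
    linarith
  have hTbelow : BddBelow T := by
    refine ⟨Cl - l e, fun t ht => ?_⟩
    have : Cl ≤ l (e + t • d) := hCl (Set.mem_image_of_mem _ ht)
    simp only [map_add, map_smul, hl1, smul_eq_mul, mul_one] at this
    linarith
  have hTconv : Convex ℝ T := by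
    intro t₁ h₁ t₂ h₂ a b ha hb hab
    have hcomb : a • (e + t₁ • d) + b • (e + t₂ • d) = e + (a * t₁ + b * t₂) • d := by
      have h1 : a • e + b • e = e := by rw [← add_smul, hab, one_smul]
      calc a • (e + t₁ • d) + b • (e + t₂ • d)
          = (a • e + b • e) + (a * t₁ + b * t₂) • d := by
            simp only [smul_add, smul_smul, add_smul]; abel
        _ = e + (a * t₁ + b * t₂) • d := by rw [h1]
    have hmem : e + (a * t₁ + b * t₂) • d ∈ K := by
      rw [← hcomb]; exact hKconv h₁ h₂ ha hb hab
    simpa [hT] using hmem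
  refine ⟨sInf T, sSup T, csInf_le hTbelow hTne, le_csSup hTabove hTne, fun t => ?_⟩
  constructor
  · intro ht
    exact ⟨csInf_le hTbelow ht, le_csSup hTabove ht⟩
  · intro ht
    have hm2 : sInf T ∈ T := hTclosed.csInf_mem ⟨0, hTne⟩ hTbelow
    have hp2 : sSup T ∈ T := hTclosed.csSup_mem ⟨0, hTne⟩ hTabove
    exact hTconv.ordConnected.out hm2 hp2 ht


/-- Case II: if there are chords of `K` through `e` in two independent directions, where `e` is
an extreme point of the semiextremal set `B`, we get a contradiction by a connectedness
argument on the rotating family of chords. -/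
private lemma two_lines {K B : Set V} (hKconv : Convex ℝ K)
    (hBK : B ⊆ K) (hBclosed : IsClosed B) (hsemi : SemiExtremal K B)
    {e : V} (he : e ∈ Set.extremePoints ℝ B)
    {d₁ d₂ : V} (hindep : ∀ c₁ c₂ : ℝ, c₁ • d₁ + c₂ • d₂ = 0 → c₁ = 0 ∧ c₂ = 0)
    {a₁ b₁ a₂ b₂ : ℝ} (ha₁ : a₁ < 0) (hb₁ : 0 < b₁) (ha₂ : a₂ < 0) (hb₂ : 0 < b₂)
    (hm₁ : e + a₁ • d₁ ∈ K) (hp₁ : e + b₁ • d₁ ∈ K)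
    (hm₂ : e + a₂ • d₂ ∈ K) (hp₂ : e + b₂ • d₂ ∈ K) : False := by
  obtain ⟨heB, heExt⟩ := he
  have hd₁ : d₁ ≠ 0 := by
    intro h
    have := (hindep 1 0 (by simp [h])).1
    norm_num at this
  -- the radius δ
  set δ : ℝ := min (min (-a₁) b₁) (min (-a₂) b₂) / 2 with hδdef
  have hδ1a : 2 * δ ≤ -a₁ := by
    have h1 := min_le_left (min (-a₁) b₁) (min (-a₂) b₂)
    have h2 := min_le_left (-a₁) b₁
    rw [hδdef]; linarith
  have hδ1b : 2 * δ ≤ b₁ := by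
    have h1 := min_le_left (min (-a₁) b₁) (min (-a₂) b₂)
    have h2 := min_le_right (-a₁) b₁
    rw [hδdef]; linarith
  have hδ2a : 2 * δ ≤ -a₂ := by
    have h1 := min_le_right (min (-a₁) b₁) (min (-a₂) b₂)
    have h2 := min_le_left (-a₂) b₂
    rw [hδdef]; linarith
  have hδ2b : 2 * δ ≤ b₂ := by
    have h1 := min_le_right (min (-a₁) b₁) (min (-a₂) b₂)
    have h2 := min_le_right (-a₂) b₂
    rw [hδdef]; linarith
  have hδpos : 0 < δ := by
    rw [hδdef]
    have h1 : 0 < min (-a₁) b₁ := lt_min (by linarith) hb₁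
    have h2 : 0 < min (-a₂) b₂ := lt_min (by linarith) hb₂
    have := lt_min h1 h2
    linarith
  -- the diamond
  have hdiamond : ∀ α β : ℝ, |α| ≤ δ → |β| ≤ δ → e + (α • d₁ + β • d₂) ∈ K := by
    intro α β hα hβ
    obtain ⟨hα1, hα2⟩ := abs_le.mp hα
    obtain ⟨hβ1, hβ2⟩ := abs_le.mp hβ
    have h1 : e + (2*α) • d₁ ∈ K := seg_mem hKconv hm₁ hp₁ (by linarith) (by linarith)
    have h2 : e + (2*β) • d₂ ∈ K := seg_mem hKconv hm₂ hp₂ (by linarith) (by linarith)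
    have hcombo : (1/2 : ℝ) • (e + (2*α) • d₁) + (1/2 : ℝ) • (e + (2*β) • d₂)
        = e + (α • d₁ + β • d₂) := by
      rw [smul_add, smul_add, smul_smul, smul_smul]
      norm_num
      module
    rw [← hcombo]
    exact hKconv h1 h2 (by norm_num) (by norm_num) (by norm_num)
  -- the rotating direction
  set D : ℝ → V := fun θ => Real.cos (Real.pi * θ) • d₁ + Real.sin (Real.pi * θ) • d₂ with hDdef
  have hDcont : Continuous D := by
    rw [hDdef]
    fun_prop
  have hDne : ∀ θ, D θ ≠ 0 := by
    intro θ h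
    obtain ⟨hc, hs⟩ := hindep _ _ h
    have := Real.sin_sq_add_cos_sq (Real.pi * θ)
    rw [hc, hs] at this
    norm_num at this
  have hDmem : ∀ (θ : ℝ) (t : ℝ), |t| ≤ δ → e + t • D θ ∈ K := by
    intro θ t ht
    have h1 : t • D θ = (t * Real.cos (Real.pi * θ)) • d₁ + (t * Real.sin (Real.pi * θ)) • d₂ := by
      rw [hDdef]
      simp only [smul_add, smul_smul]
    rw [h1]
    refine hdiamond _ _ ?_ ?_
    · rw [abs_mul]
      calc |t| * |Real.cos (Real.pi * θ)| ≤ |t| * 1 :=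
            mul_le_mul_of_nonneg_left (Real.abs_cos_le_one _) (abs_nonneg t)
        _ ≤ δ := by rwa [mul_one]
    · rw [abs_mul]
      calc |t| * |Real.sin (Real.pi * θ)| ≤ |t| * 1 :=
            mul_le_mul_of_nonneg_left (Real.abs_sin_le_one _) (abs_nonneg t)
        _ ≤ δ := by rwa [mul_one]
  -- the two closed sets
  set H : Set ℝ := {θ | e + δ • D θ ∈ B} with hHdef
  set H' : Set ℝ := {θ | e + (-δ) • D θ ∈ B} with hH'def
  have hHclosed : IsClosed H := hBclosed.preimage (by fun_prop)
  have hH'closed : IsClosed H' := hBclosed.preimage (by fun_prop)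
  -- cover
  have hcover : Set.Icc (0:ℝ) 1 ⊆ H ∪ H' := by
    intro θ _
    have hx : e + δ • D θ ∈ K := hDmem θ δ (by rw [abs_of_pos hδpos])
    have hy : e + (-δ) • D θ ∈ K := hDmem θ (-δ) (by rw [abs_neg, abs_of_pos hδpos])
    have hne : e + (-δ) • D θ ≠ e + δ • D θ := by
      intro h
      have := line_inj (hDne θ) h
      linarith
    have hmem : e ∈ openSegment ℝ (e + (-δ) • D θ) (e + δ • D θ) :=
      line_openSeg' (by linarith) hδpos
    rcases hsemi hy hx hne ⟨e, hmem, heB⟩ with h | h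
    · exact Or.inr h
    · exact Or.inl h
  -- disjointness
  have hdisj : ∀ θ, ¬ (θ ∈ H ∧ θ ∈ H') := by
    rintro θ ⟨h1, h2⟩
    have hmem : e ∈ openSegment ℝ (e + (-δ) • D θ) (e + δ • D θ) :=
      line_openSeg' (by linarith) hδpos
    have := heExt h1 h2 (by rwa [openSegment_symm] at hmem)
    have h0 : δ • D θ = 0 := by
      have := congrArg (fun z => z - e) this
      simpa [add_sub_cancel_left] using this
    rcases smul_eq_zero.mp h0 with h | h
    · linarith
    · exact hDne θ h
  -- the final straddle contradiction along d₁
  have hstradd : e + (-δ) • d₁ ∈ B → e + δ • d₁ ∈ B → False := by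
    intro hA hB'
    have hmem : e ∈ openSegment ℝ (e + (-δ) • d₁) (e + δ • d₁) :=
      line_openSeg' (by linarith) hδpos
    have heq := heExt hB' hA (by rwa [openSegment_symm] at hmem)
    have h0' : δ • d₁ = 0 := by
      have := congrArg (fun z => z - e) heq
      simpa [add_sub_cancel_left] using this
    rcases smul_eq_zero.mp h0' with h | h
    · linarith
    · exact hd₁ h
  -- connectedness
  have hstraddle : False := by
    have hconn := isPreconnected_closed_iff.mp isPreconnected_Icc H H' hHclosed hH'closed hcover
    by_cases hne1 : (Set.Icc (0:ℝ) 1 ∩ H).Nonempty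
    · by_cases hne2 : (Set.Icc (0:ℝ) 1 ∩ H').Nonempty
      · obtain ⟨θ, -, hθ⟩ := hconn hne1 hne2
        exact hdisj θ hθ
      · -- H' misses Icc : Icc ⊆ H
        have hIccH : Set.Icc (0:ℝ) 1 ⊆ H := by
          intro θ hθ
          rcases hcover hθ with h | h
          · exact h
          · exact absurd ⟨θ, hθ, h⟩ hne2
        -- both endpoints of the d₁ chord are in B
        have h0 : e + δ • D 0 ∈ B := hIccH (by norm_num)
        have h1 : e + δ • D 1 ∈ B := hIccH (by norm_num)
        have hD0 : D 0 = d₁ := by rw [hDdef]; simp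
        have hD1 : D 1 = -d₁ := by rw [hDdef]; simp
        rw [hD0] at h0
        rw [hD1, show δ • (-d₁) = (-δ) • d₁ by module] at h1
        exact hstradd h1 h0
    · -- H misses Icc : Icc ⊆ H'
      have hIccH' : Set.Icc (0:ℝ) 1 ⊆ H' := by
        intro θ hθ
        rcases hcover hθ with h | h
        · exact absurd ⟨θ, hθ, h⟩ hne1
        · exact h
      have h0 : e + (-δ) • D 0 ∈ B := hIccH' (by norm_num)
      have h1 : e + (-δ) • D 1 ∈ B := hIccH' (by norm_num)
      have hD0 : D 0 = d₁ := by rw [hDdef]; simp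
      have hD1 : D 1 = -d₁ := by rw [hDdef]; simp
      rw [hD0] at h0
      rw [hD1, show (-δ) • (-d₁) = δ • d₁ by module] at h1
      exact hstradd h0 h1
  exact hstraddle


/-- Case I: all chords of `K` through `e` lie on the single line `e + ℝ d`. -/
private lemma single_line {K B : Set V} (hKconv : Convex ℝ K)
    (hsemi : SemiExtremal K B)
    (hmin : ∀ B' : Set V, B'.Nonempty → IsCompact B' → B' ⊆ B → SemiExtremal K B' → B' = B)
    {e : V} (he : e ∈ Set.extremePoints ℝ B)
    {d : V} (hd : d ≠ 0)
    (hchords : ∀ u v : V, u ∈ K → v ∈ K → e ∈ openSegment ℝ u v → ∃ t : ℝ, u = e + t • d)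
    {tm tp : ℝ} (htm : tm < 0) (htp : 0 < tp)
    (hT : ∀ t : ℝ, e + t • d ∈ K ↔ t ∈ Set.Icc tm tp)
    (hQ : e + tm • d ∈ B) :
    ∃ x ∈ Set.extremePoints ℝ K, x ∈ B := by
  obtain ⟨heB, heExt⟩ := he
  have hQmK : e + tm • d ∈ K := (hT tm).mpr ⟨le_refl _, by linarith⟩
  have hQpK : e + tp • d ∈ K := (hT tp).mpr ⟨by linarith, le_refl _⟩
  -- the other endpoint is not in B
  have hQp_notB : e + tp • d ∉ B := by
    intro h
    have hmem : e ∈ openSegment ℝ (e + tm • d) (e + tp • d) := line_openSeg' htm htp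
    have h1 := heExt hQ h hmem
    have h2 : e + tm • d = e + (0:ℝ) • d := by simpa using h1
    have := line_inj hd h2
    linarith
  -- the segment σ from Q₋ to e is contained in B
  have hσB : ∀ t : ℝ, tm ≤ t → t ≤ 0 → e + t • d ∈ B := by
    intro t h1 h2
    rcases eq_or_lt_of_le h2 with rfl | h2'
    · simpa using heB
    rcases eq_or_lt_of_le h1 with rfl | h1'
    · exact hQ
    have hwK : e + t • d ∈ K := (hT t).mpr ⟨h1, by linarith⟩
    have hne : e + t • d ≠ e + tp • d := fun h => by
      have := line_inj hd h; linarith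
    have hmem : e ∈ openSegment ℝ (e + t • d) (e + tp • d) := line_openSeg' h2' htp
    rcases hsemi hwK hQpK hne ⟨e, hmem, heB⟩ with h | h
    · exact h
    · exact absurd h hQp_notB
  by_cases hBl : ∀ b ∈ B, ∃ t : ℝ, b = e + t • d
  · -- B lies on the line: Q₋ is an extreme point of K
    refine ⟨e + tm • d, ?_, hQ⟩
    rw [mem_extremePoints]
    refine ⟨hQmK, ?_⟩
    intro x₁ hx₁ x₂ hx₂ hmem
    by_cases hx12 : x₁ = x₂
    · subst hx12
      rw [openSegment_same] at hmem
      exact ⟨hmem.symm, hmem.symm⟩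
    · exfalso
      by_cases hl₁ : ∃ t : ℝ, x₁ = e + t • d
      · by_cases hl₂ : ∃ t : ℝ, x₂ = e + t • d
        · obtain ⟨t₁, rfl⟩ := hl₁
          obtain ⟨t₂, rfl⟩ := hl₂
          have ht12 : t₁ ≠ t₂ := fun h => hx12 (by rw [h])
          have hp₁ := (hT t₁).mp hx₁
          have hp₂ := (hT t₂).mp hx₂
          rcases openSeg_on_line hd hmem ht12 with ⟨h1, h2⟩ | ⟨h1, h2⟩
          · linarith [hp₁.1]
          · linarith [hp₂.1]
        · rcases hsemi hx₁ hx₂ hx12 ⟨e + tm • d, hmem, hQ⟩ with h | h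
          · exact hl₂ (third_on_line hmem (hBl x₁ h) ⟨tm, rfl⟩)
          · exact hl₂ (hBl x₂ h)
      · rcases hsemi hx₁ hx₂ hx12 ⟨e + tm • d, hmem, hQ⟩ with h | h
        · exact hl₁ (hBl x₁ h)
        · exact hl₁ (third_on_line (by rwa [openSegment_symm] at hmem) (hBl x₂ h) ⟨tm, rfl⟩)
  · -- B has a point off the line : σ is a proper semiextremal subset, contradiction
    exfalso
    push_neg at hBl
    obtain ⟨b₀, hb₀B, hb₀l⟩ := hBl
    -- transport: a chord through an interior point of σ with an endpoint off the line
    -- yields a chord through e with an endpoint off the line.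
    have htransport : ∀ x y : V, x ∈ K → y ∈ K → ∀ τ : ℝ, tm ≤ τ → τ ≤ 0 →
        e + τ • d ∈ openSegment ℝ x y → ∃ t : ℝ, x = e + t • d := by
      intro x y hx hy τ hτm hτ0 hseg2
      rcases eq_or_lt_of_le hτ0 with rfl | hτ0'
      · exact hchords x y hx hy (by simpa using hseg2)
      -- τ < 0
      set r : ℝ := (-τ) / (tp - τ) with hrdef
      have htpτ : (0:ℝ) < tp - τ := by linarith
      have hr0 : 0 < r := by
        rw [hrdef]; exact div_pos (by linarith) htpτ
      have hr1 : r < 1 := by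
        rw [hrdef, div_lt_one htpτ]; linarith
      obtain ⟨a, b, ha, hb, hab, hcombo⟩ := hseg2
      set u' : ℝ := (1 - r) * a with hu'def
      have hu'0 : 0 < u' := by rw [hu'def]; exact mul_pos (by linarith) ha
      set u'' : ℝ := (1 - r) * b + r with hu''def
      have hu''0 : 0 < u'' := by
        rw [hu''def]; have := mul_pos (show (0:ℝ) < 1 - r by linarith) hb; linarith
      have hsum : u' + u'' = 1 := by rw [hu'def, hu''def]; nlinarith [hab]
      set m : V := (((1 - r) * b) / u'') • y + (r / u'') • (e + tp • d) with hmdef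
      have hmK : m ∈ K := by
        rw [hmdef]
        refine hKconv hy hQpK ?_ ?_ ?_
        · exact div_nonneg (by nlinarith) (le_of_lt hu''0)
        · exact div_nonneg (by linarith) (le_of_lt hu''0)
        · rw [← add_div, hu''def]
          exact div_self (ne_of_gt hu''0)
      have hcombo2 : u' • x + u'' • m = e := by
        have hexp : ((1:ℝ) - r) • (a • x + b • y) + r • (e + tp • d) = e := by
          rw [hcombo]
          rw [combo_line e d (1 - r) r τ tp]
          have e1 : (1 - r) + r = 1 := by ring
          have e2 : (1 - r) * τ + r * tp = 0 := by
            rw [hrdef]; field_simp; ring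
          rw [e1, e2, one_smul, zero_smul, add_zero]
        have hmul1 : u'' * (((1 - r) * b) / u'') = (1 - r) * b := by
          field_simp
        have hmul2 : u'' * (r / u'') = r := by
          field_simp
        rw [hmdef, smul_add, smul_smul, smul_smul, hmul1, hmul2, hu'def]
        calc ((1 - r) * a) • x + (((1 - r) * b) • y + r • (e + tp • d))
            = ((1:ℝ) - r) • (a • x + b • y) + r • (e + tp • d) := by
              simp only [smul_add, smul_smul]; abel
          _ = e := hexp
      exact hchords x m hx hmK ⟨u', u'', hu'0, hu''0, hsum, hcombo2⟩
    -- σ as a set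
    set σ : Set V := (fun t : ℝ => e + t • d) '' Set.Icc tm 0 with hσdef
    have hσsub : σ ⊆ B := by
      rintro _ ⟨t, ⟨h1, h2⟩, rfl⟩
      exact hσB t h1 h2
    have hσne : σ.Nonempty := ⟨e + tm • d, tm, ⟨le_refl _, by linarith⟩, rfl⟩
    have hσcpt : IsCompact σ := isCompact_Icc.image (by fun_prop)
    have hσsemi : SemiExtremal K σ := by
      rintro x hx y hy hxy ⟨z, hzseg, hzσ⟩
      obtain ⟨τ, ⟨hτ1, hτ2⟩, rfl⟩ := hzσ
      by_cases hl₁ : ∃ t : ℝ, x = e + t • d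
      · by_cases hl₂ : ∃ t : ℝ, y = e + t • d
        · obtain ⟨t₁, rfl⟩ := hl₁
          obtain ⟨t₂, rfl⟩ := hl₂
          have ht12 : t₁ ≠ t₂ := fun h => hxy (by rw [h])
          have hp₁ := (hT t₁).mp hx
          have hp₂ := (hT t₂).mp hy
          rcases openSeg_on_line hd hzseg ht12 with ⟨h1, h2⟩ | ⟨h1, h2⟩
          · left; exact ⟨t₁, ⟨hp₁.1, by linarith⟩, rfl⟩
          · right; exact ⟨t₂, ⟨hp₂.1, by linarith⟩, rfl⟩
        · exfalso
          exact hl₂ (htransport y x hy hx τ hτ1 hτ2 (by rwa [openSegment_symm] at hzseg))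
      · exfalso
        exact hl₁ (htransport x y hx hy τ hτ1 hτ2 hzseg)
    have hσeq := hmin σ hσne hσcpt hσsub hσsemi
    rw [← hσeq] at hb₀B
    obtain ⟨t, -, ht⟩ := hb₀B
    exact hb₀l t ht.symm


/-- From a strict chord representation, the other endpoint has a negative parameter. -/
private lemma chord_param {e u v : V} (hseg : e ∈ openSegment ℝ u v) :
    ∃ s : ℝ, s < 0 ∧ u = e + s • (v - e) := by
  obtain ⟨a, b, ha, hb, hab, hcombo⟩ := hseg
  have hane : a ≠ 0 := ne_of_gt ha
  refine ⟨-(b/a), by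
    have : 0 < b / a := div_pos hb ha
    linarith, ?_⟩
  have key : a • u = a • (e + (-(b/a)) • (v - e)) := by
    have h1 : a • u = e - b • v := by rw [← hcombo]; abel
    rw [h1]
    have h2 : a • (e + (-(b/a)) • (v - e)) = a • e + (-b) • (v - e) := by
      rw [smul_add, smul_smul]
      have h3 : a * (-(b/a)) = -b := by field_simp
      rw [h3]
    rw [h2]
    have hb1 : (1:ℝ) = a + b := hab.symm
    calc e - b • v = (a + b) • e - b • v := by rw [← hb1, one_smul]
      _ = a • e + (-b) • (v - e) := by
          simp only [add_smul, neg_smul, smul_sub]; abel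
  exact smul_right_injective V hane key

/-- Superlevel sets of an upper semicontinuous function on a closed set are closed. -/
private lemma usc_superlevel_closed {K : Set V} (hKclosed : IsClosed K) {f : V → ℝ}
    (husc : UpperSemicontinuousOn f K) (c : ℝ) : IsClosed {x ∈ K | c ≤ f x} := by
  refine isClosed_of_closure_subset fun x hx => ?_
  have hxK : x ∈ K := hKclosed.closure_subset (closure_mono (fun z hz => hz.1) hx)
  refine ⟨hxK, ?_⟩
  by_contra hlt
  push_neg at hlt
  have hev : ∀ᶠ z in nhdsWithin x K, f z < c := husc x hxK c hlt
  have hne : (nhdsWithin x {y ∈ K | c ≤ f y}).NeBot := mem_closure_iff_nhdsWithin_neBot.mp hx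
  have hev2 : ∀ᶠ z in nhdsWithin x {y ∈ K | c ≤ f y}, f z < c :=
    hev.filter_mono (nhdsWithin_mono x fun z hz => hz.1)
  have hev3 : ∀ᶠ z in nhdsWithin x {y ∈ K | c ≤ f y}, c ≤ f z :=
    eventually_mem_nhdsWithin.mono fun z hz => hz.2
  obtain ⟨z, h1, h2⟩ := (hev2.and hev3).exists
  linarith

/-- An upper semicontinuous function attains its maximum on a nonempty compact set. -/
private lemma usc_exists_max {K : Set V} (hKne : K.Nonempty) (hKc : IsCompact K)
    {f : V → ℝ} (husc : UpperSemicontinuousOn f K) :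
    ∃ x ∈ K, ∀ y ∈ K, f y ≤ f x := by
  haveI : Nonempty K := hKne.to_subtype
  have hSclosed : ∀ y : K, IsClosed {x ∈ K | f ↑y ≤ f x} := fun y =>
    usc_superlevel_closed hKc.isClosed husc (f ↑y)
  have key : (⋂ y : K, {x ∈ K | f ↑y ≤ f x}).Nonempty := by
    apply IsCompact.nonempty_iInter_of_directed_nonempty_isCompact_isClosed
    · intro y₁ y₂
      rcases le_total (f ↑y₁) (f ↑y₂) with h | h
      · exact ⟨y₂, fun x hx => ⟨hx.1, le_trans h hx.2⟩, fun x hx => hx⟩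
      · exact ⟨y₁, fun x hx => hx, fun x hx => ⟨hx.1, le_trans h hx.2⟩⟩
    · exact fun y => ⟨↑y, y.2, le_refl _⟩
    · exact fun y => hKc.of_isClosed_subset (hSclosed y) (Set.sep_subset _ _)
    · exact hSclosed
  obtain ⟨x, hx⟩ := key
  simp only [Set.mem_iInter, Set.mem_setOf_eq] at hx
  obtain ⟨y₀, hy₀⟩ := hKne
  exact ⟨x, (hx ⟨y₀, hy₀⟩).1, fun y hy => (hx ⟨y, hy⟩).2⟩

end Top

theorem quasiconvex_maximum_principle
    {V : Type*} [AddCommGroup V] [Module ℝ V] [TopologicalSpace V]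
    [IsTopologicalAddGroup V] [ContinuousSMul ℝ V] [T2Space V]
    [LocallyConvexSpace ℝ V]
    (K : Set V) (hKne : K.Nonempty) (hKc : IsCompact K) (hKconv : Convex ℝ K)
    (f : V → ℝ) (husc : UpperSemicontinuousOn f K)
    (hqc : ∀ ⦃x⦄, x ∈ K → ∀ ⦃y⦄, y ∈ K → ∀ ⦃l : ℝ⦄, l ∈ Set.Icc (0:ℝ) 1 →
      f (l • x + (1 - l) • y) ≤ max (f x) (f y)) :
    ∃ x ∈ Set.extremePoints ℝ K, ∀ y ∈ K, f y ≤ f x := by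
  classical
  obtain ⟨x₀, hx₀K, hx₀max⟩ := usc_exists_max hKne hKc husc
  set A : Set V := {x | x ∈ K ∧ ∀ y ∈ K, f y ≤ f x} with hAdef
  have hAne : A.Nonempty := ⟨x₀, hx₀K, hx₀max⟩
  have hAK : A ⊆ K := fun x hx => hx.1
  haveI : Nonempty K := hKne.to_subtype
  have hAeq : A = ⋂ y : K, {x ∈ K | f ↑y ≤ f x} := by
    ext x
    simp only [hAdef, Set.mem_iInter, Set.mem_setOf_eq]
    constructor
    · rintro ⟨h1, h2⟩ y
      exact ⟨h1, h2 ↑y y.2⟩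
    · intro h
      obtain ⟨y₀, hy₀⟩ := hKne
      exact ⟨(h ⟨y₀, hy₀⟩).1, fun y hy => (h ⟨y, hy⟩).2⟩
  have hAclosed : IsClosed A := by
    rw [hAeq]
    exact isClosed_iInter fun y => usc_superlevel_closed hKc.isClosed husc (f ↑y)
  have hAcpt : IsCompact A := hKc.of_isClosed_subset hAclosed hAK
  -- the maximizer set is semiextremal
  have hAsemi : SemiExtremal K A := by
    rintro x hx y hy hxy ⟨z, hzseg, hzA⟩
    obtain ⟨a, b, ha, hb, hab, hcombo⟩ := hzseg
    have hqcz := hqc hx hy (l := a) ⟨le_of_lt ha, by linarith⟩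
    rw [show (1 : ℝ) - a = b by linarith, hcombo] at hqcz
    rcases le_total (f x) (f y) with h | h
    · right
      refine ⟨hy, fun w hw => ?_⟩
      have h1 := hzA.2 w hw
      rw [max_eq_right h] at hqcz
      linarith
    · left
      refine ⟨hx, fun w hw => ?_⟩
      have h1 := hzA.2 w hw
      rw [max_eq_left h] at hqcz
      linarith
  -- Zorn: a minimal nonempty compact semiextremal subset of A
  set S : Set (Set V) := {B | B.Nonempty ∧ IsCompact B ∧ B ⊆ A ∧ SemiExtremal K B} with hSdef
  have hzorn : ∃ B, Minimal (· ∈ S) B := by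
    apply zorn_superset
    intro c hcS hchain
    rcases c.eq_empty_or_nonempty with rfl | hcne
    · exact ⟨A, ⟨hAne, hAcpt, subset_rfl, hAsemi⟩, by simp⟩
    refine ⟨⋂₀ c, ⟨?_, ?_, ?_, ?_⟩, fun s hs => Set.sInter_subset_of_mem hs⟩
    · haveI : Nonempty c := hcne.to_subtype
      apply IsCompact.nonempty_sInter_of_directed_nonempty_isCompact_isClosed
      · intro s hs t ht
        rcases hchain.total hs ht with h | h
        · exact ⟨s, hs, subset_rfl, h⟩
        · exact ⟨t, ht, h, subset_rfl⟩
      · exact fun s hs => (hcS hs).1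
      · exact fun s hs => (hcS hs).2.1
      · exact fun s hs => (hcS hs).2.1.isClosed
    · obtain ⟨s₀, hs₀⟩ := hcne
      exact (hcS hs₀).2.1.of_isClosed_subset
        (isClosed_sInter fun s hs => (hcS hs).2.1.isClosed) (Set.sInter_subset_of_mem hs₀)
    · obtain ⟨s₀, hs₀⟩ := hcne
      exact (Set.sInter_subset_of_mem hs₀).trans (hcS hs₀).2.2.1
    · rintro x hx y hy hxy ⟨z, hzseg, hz⟩
      by_contra hcon
      push_neg at hcon
      obtain ⟨hxn, hyn⟩ := hcon
      simp only [Set.mem_sInter, not_forall] at hxn hyn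
      obtain ⟨Bx, hBx, hxB⟩ := hxn
      obtain ⟨By, hBy, hyB⟩ := hyn
      rcases hchain.total hBx hBy with h | h
      · rcases (hcS hBx).2.2.2 hx hy hxy ⟨z, hzseg, hz Bx hBx⟩ with h' | h'
        · exact hxB h'
        · exact hyB (h h')
      · rcases (hcS hBy).2.2.2 hx hy hxy ⟨z, hzseg, hz By hBy⟩ with h' | h'
        · exact hxB (h h')
        · exact hyB h'
  obtain ⟨B, hBS, hBminimal⟩ := hzorn
  obtain ⟨hBne, hBcpt, hBA, hBsemi⟩ := hBS
  have hmin : ∀ B' : Set V, B'.Nonempty → IsCompact B' → B' ⊆ B → SemiExtremal K B' → B' = B := by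
    intro B' h1 h2 h3 h4
    have hB'S : B' ∈ S := ⟨h1, h2, h3.trans hBA, h4⟩
    exact le_antisymm h3 (hBminimal hB'S h3)
  -- an extreme point of B
  obtain ⟨e, he⟩ := hBcpt.extremePoints_nonempty hBne
  by_cases heK : e ∈ Set.extremePoints ℝ K
  · exact ⟨e, heK, (hBA he.1).2⟩
  -- e is in B but not an extreme point of K: there is a chord through e
  have heB : e ∈ B := he.1
  have heKmem : e ∈ K := hAK (hBA heB)
  rw [mem_extremePoints] at heK
  push_neg at heK
  obtain ⟨x₁, hx₁, x₂, hx₂, hseg, hnboth⟩ := heK heKmem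
  have hx12 : x₁ ≠ x₂ := by
    rintro rfl
    rw [openSegment_same] at hseg
    exact hnboth hseg.symm hseg.symm
  have hx₂e : x₂ ≠ e := by
    rintro rfl
    obtain ⟨s, hs, hval⟩ := chord_param hseg
    rw [sub_self, smul_zero, add_zero] at hval
    exact hx12 hval
  obtain ⟨s₁, hs₁neg, hx₁eq⟩ := chord_param hseg
  set d₁ : V := x₂ - e with hd₁def
  have hd₁ : d₁ ≠ 0 := sub_ne_zero.mpr hx₂e
  have hx₂eq : x₂ = e + (1:ℝ) • d₁ := by rw [hd₁def]; simp
  by_cases hOFF : ∃ u v : V, u ∈ K ∧ v ∈ K ∧ e ∈ openSegment ℝ u v ∧ ∀ t : ℝ, u ≠ e + t • d₁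
  · -- Case II: two independent chord directions
    obtain ⟨u, v, hu, hv, hseg2, hul⟩ := hOFF
    have hue : u ≠ e := by
      rintro rfl
      exact hul 0 (by simp)
    obtain ⟨s₂, hs₂neg, hveq⟩ := chord_param (show e ∈ openSegment ℝ v u by
      rwa [openSegment_symm] at hseg2)
    set d₂ : V := u - e with hd₂def
    have hueq : u = e + (1:ℝ) • d₂ := by rw [hd₂def]; simp
    have hindep : ∀ c₁ c₂ : ℝ, c₁ • d₁ + c₂ • d₂ = 0 → c₁ = 0 ∧ c₂ = 0 := by
      intro c₁ c₂ hc
      by_cases hc₂ : c₂ = 0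
      · subst hc₂
        rw [zero_smul, add_zero] at hc
        rcases smul_eq_zero.mp hc with h | h
        · exact ⟨h, rfl⟩
        · exact absurd h hd₁
      · exfalso
        have hd₂eq : d₂ = (-(c₁/c₂)) • d₁ := by
          have h1 : c₂ • d₂ = (-c₁) • d₁ := by
            rw [neg_smul]
            have hc' : c₂ • d₂ + c₁ • d₁ = 0 := by rw [add_comm]; exact hc
            exact eq_neg_of_add_eq_zero_left hc'
          have := congrArg (fun w => c₂⁻¹ • w) h1
          simpa [smul_smul, inv_mul_cancel₀ hc₂, div_eq_inv_mul, neg_div] using this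
        exact hul (-(c₁/c₂)) (by rw [hueq, hd₂eq, one_smul])
    exact absurd (two_lines hKconv (hBA.trans hAK) hBcpt.isClosed hBsemi he hindep
      hs₁neg one_pos hs₂neg one_pos
      (by rw [← hx₁eq]; exact hx₁) (by rw [← hx₂eq]; exact hx₂)
      (by rw [← hveq]; exact hv) (by rw [← hueq]; exact hu)) not_false
  · -- Case I: all chords through e lie on one line
    push_neg at hOFF
    have hchords : ∀ u v : V, u ∈ K → v ∈ K → e ∈ openSegment ℝ u v → ∃ t : ℝ, u = e + t • d₁ := by
      intro u v hu hv hseg2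
      obtain ⟨t, ht⟩ := hOFF u v hu hv hseg2
      exact ⟨t, ht⟩
    obtain ⟨tm, tp, htm0, htp0, hT⟩ := line_chord hKc hKconv heKmem hd₁
    have htm : tm < 0 := by
      have := ((hT s₁).mp (by rw [← hx₁eq]; exact hx₁)).1
      linarith
    have htp : 0 < tp := by
      have := ((hT 1).mp (by rw [← hx₂eq]; exact hx₂)).2
      linarith
    have hQmK : e + tm • d₁ ∈ K := (hT tm).mpr ⟨le_refl _, by linarith⟩
    have hQpK : e + tp • d₁ ∈ K := (hT tp).mpr ⟨by linarith, le_refl _⟩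
    have hQne : e + tm • d₁ ≠ e + tp • d₁ := fun h => by
      have := line_inj hd₁ h; linarith
    have hemem : e ∈ openSegment ℝ (e + tm • d₁) (e + tp • d₁) := line_openSeg' htm htp
    have hdichot := hBsemi hQmK hQpK hQne ⟨e, hemem, heB⟩
    have hgoal : ∃ x ∈ Set.extremePoints ℝ K, x ∈ B := by
      rcases hdichot with hQ | hQ
      · exact single_line hKconv hBsemi hmin he hd₁ hchords htm htp hT hQ
      · -- apply single_line with the direction reversed
        have hd₁' : -d₁ ≠ 0 := neg_ne_zero.mpr hd₁
        have hchords' : ∀ u v : V, u ∈ K → v ∈ K → e ∈ openSegment ℝ u v →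
            ∃ t : ℝ, u = e + t • (-d₁) := by
          intro u v hu hv hseg2
          obtain ⟨t, ht⟩ := hchords u v hu hv hseg2
          exact ⟨-t, by rw [ht, neg_smul, smul_neg, neg_neg]⟩
        have hT' : ∀ t : ℝ, e + t • (-d₁) ∈ K ↔ t ∈ Set.Icc (-tp) (-tm) := by
          intro t
          rw [show t • (-d₁) = (-t) • d₁ by rw [neg_smul, smul_neg]]
          rw [hT (-t)]
          constructor
          · rintro ⟨h1, h2⟩; exact ⟨by linarith, by linarith⟩
          · rintro ⟨h1, h2⟩; exact ⟨by linarith, by linarith⟩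
        have hQ' : e + (-tp) • (-d₁) ∈ B := by
          rw [show (-tp) • (-d₁) = tp • d₁ by rw [neg_smul, smul_neg, neg_neg]]
          exact hQ
        exact single_line hKconv hBsemi hmin he hd₁' hchords'
          (by linarith) (by linarith) hT' hQ'
    obtain ⟨x, hxext, hxB⟩ := hgoal
    exact ⟨x, hxext, (hBA hxB).2⟩
end

section
/- Let K be a nonempty compact subset of a Hausdorff topological vector space, and let E be a nonempty closed K-semi-extremal subset of K. Then the collection of nonempty closed K-semi-extremal subsets of E, ordered by inclusion, has a minimal element. -/
theorem exists_minimal_semiExtremal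
    {V : Type*} [AddCommGroup V] [Module ℝ V] [TopologicalSpace V]
    [IsTopologicalAddGroup V] [ContinuousSMul ℝ V] [T2Space V]
    (K : Set V) (hKne : K.Nonempty) (hKc : IsCompact K)
    (E : Set V) (hEK : E ⊆ K) (hEne : E.Nonempty) (hEcl : IsClosed E)
    (hEse : SemiExtremal K E) :
    ∃ A, (A ⊆ E ∧ A.Nonempty ∧ IsClosed A ∧ SemiExtremal K A) ∧
      ∀ B, (B ⊆ E ∧ B.Nonempty ∧ IsClosed B ∧ SemiExtremal K B) → B ⊆ A → B = A := by
  set S : Set (Set V) := {A | A ⊆ E ∧ A.Nonempty ∧ IsClosed A ∧ SemiExtremal K A} with hS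
  have key : ∀ c ⊆ S, IsChain (· ⊆ ·) c → c.Nonempty → ∃ lb ∈ S, ∀ s ∈ c, lb ⊆ s := by
    intro c hcS hchain hcne
    refine ⟨⋂₀ c, ⟨?_, ?_, ?_, ?_⟩, fun s hs => Set.sInter_subset_of_mem hs⟩
    · obtain ⟨s, hs⟩ := hcne
      exact (Set.sInter_subset_of_mem hs).trans (hcS hs).1
    · haveI : Nonempty c := hcne.to_subtype
      exact IsCompact.nonempty_sInter_of_directed_nonempty_isCompact_isClosed
        (fun a ha b hb => (hchain.total ha hb).elim (fun h => ⟨a, ha, subset_rfl, h⟩) (fun h => ⟨b, hb, h, subset_rfl⟩))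
        (fun U hU => (hcS hU).2.1)
        (fun U hU => hKc.of_isClosed_subset (hcS hU).2.2.1 (((hcS hU).1).trans hEK))
        (fun U hU => (hcS hU).2.2.1)
    · exact isClosed_sInter fun U hU => (hcS hU).2.2.1
    · intro x hx y hy hxy hseg
      by_contra hcon
      push_neg at hcon
      obtain ⟨hx', hy'⟩ := hcon
      rw [Set.mem_sInter] at hx' hy'
      push_neg at hx' hy'
      obtain ⟨A, hA, hxA⟩ := hx'
      obtain ⟨B, hB, hyB⟩ := hy'
      obtain ⟨z, hz1, hz2⟩ := hseg
      rw [Set.mem_sInter] at hz2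
      rcases hchain.total hA hB with h | h
      · rcases (hcS hA).2.2.2 hx hy hxy ⟨z, hz1, hz2 A hA⟩ with h1 | h1
        · exact hxA h1
        · exact hyB (h h1)
      · rcases (hcS hB).2.2.2 hx hy hxy ⟨z, hz1, hz2 B hB⟩ with h1 | h1
        · exact hxA (h h1)
        · exact hyB h1
  obtain ⟨m, -, hmS, hmin⟩ := zorn_superset_nonempty S key E ⟨subset_rfl, hEne, hEcl, hEse⟩
  exact ⟨m, hmS, fun B hB hBm => hBm.antisymm (hmin hB hBm)⟩
end

section
/- Let K be a nonempty compact convex subset of a Hausdorff locally convex topological vector space. Every nonempty closed K-semi-extremal subset of K contains an extreme point of K. -/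
open Set

section Aux

variable {V : Type*} [AddCommGroup V] [Module ℝ V] [TopologicalSpace V]
  [IsTopologicalAddGroup V] [ContinuousSMul ℝ V] [T2Space V] [LocallyConvexSpace ℝ V]

/-- Krein-Milman-type lemma: every nonempty closed extreme subset of a compact set
contains an extreme point of the ambient set. -/
theorem aux_extreme_subset_has_extremePoint {K B : Set V} (hKc : IsCompact K)
    (hBne : B.Nonempty) (hBcl : IsClosed B) (hBex : IsExtreme ℝ K B) :
    (B ∩ Set.extremePoints ℝ K).Nonempty := by
  classical
  let S : Set (Set V) := { t | t.Nonempty ∧ IsClosed t ∧ IsExtreme ℝ K t ∧ t ⊆ B }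
  rsuffices ⟨t, ht⟩ : ∃ t, Minimal (· ∈ S) t
  · obtain ⟨⟨x, hxt⟩, htclos, hst, htB⟩ := ht.prop
    refine ⟨x, htB hxt, IsExtreme.mem_extremePoints ?_⟩
    rwa [← eq_singleton_iff_unique_mem.2 ⟨hxt, fun y hyB => ?_⟩]
    by_contra hyx
    obtain ⟨l, hl⟩ := geometric_hahn_banach_point_point hyx
    obtain ⟨z, hzt, hz⟩ :=
      (hKc.of_isClosed_subset htclos hst.1).exists_isMaxOn ⟨x, hxt⟩ l.continuous.continuousOn
    have h : IsExposed ℝ t ({ z ∈ t | ∀ w ∈ t, l w ≤ l z }) := fun _ => ⟨l, rfl⟩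
    rw [ht.eq_of_ge (y := ({ z ∈ t | ∀ w ∈ t, l w ≤ l z }))
      ⟨⟨z, hzt, hz⟩, h.isClosed htclos, hst.trans h.isExtreme, (t.sep_subset _).trans htB⟩
      (t.sep_subset _)] at hyB
    exact hl.not_ge (hyB.2 x hxt)
  refine zorn_superset _ fun F hFS hF => ?_
  obtain rfl | hFnemp := F.eq_empty_or_nonempty
  · exact ⟨B, ⟨hBne, hBcl, hBex, Subset.rfl⟩, fun _ h => h.elim⟩
  refine ⟨⋂₀ F, ⟨?_, isClosed_sInter fun t ht => (hFS ht).2.1,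
    isExtreme_sInter hFnemp fun t ht => (hFS ht).2.2.1, ?_⟩, fun t ht => sInter_subset_of_mem ht⟩
  · haveI : Nonempty (↥F) := hFnemp.to_subtype
    rw [sInter_eq_iInter]
    refine IsCompact.nonempty_iInter_of_directed_nonempty_isCompact_isClosed _ (fun t u => ?_)
      (fun t => (hFS t.mem).1)
      (fun t => hKc.of_isClosed_subset (hFS t.mem).2.1 (hFS t.mem).2.2.1.1) fun t =>
        (hFS t.mem).2.1
    obtain htu | hut := hF.total t.mem u.mem
    exacts [⟨t, Subset.rfl, htu⟩, ⟨u, hut, Subset.rfl⟩]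
  · obtain ⟨t0, ht0⟩ := hFnemp
    exact (sInter_subset_of_mem ht0).trans (hFS ht0).2.2.2

end Aux

section Gauge

variable {V : Type*} [AddCommGroup V] [Module ℝ V]

/-- The set of admissible "gauge parameters" of `x` relative to the convex
complement `K \ E`, viewed from the base point `w0`. -/
def auxSt (K E : Set V) (w0 x : V) : Set ℝ :=
  {t : ℝ | 1 ≤ t ∧ w0 + t⁻¹ • (x - w0) ∈ K \ E}

/-- A relative Minkowski-gauge-like function for `K \ E` based at `w0`. -/
noncomputable def auxGamma (K E : Set V) (w0 x : V) : ℝ := sInf (auxSt K E w0 x)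

lemma aux_combo_eq (w0 x : V) (t : ℝ) :
    w0 + t⁻¹ • (x - w0) = (1 - t⁻¹) • w0 + t⁻¹ • x := by
  rw [smul_sub, sub_smul, one_smul]; abel

variable [TopologicalSpace V] [IsTopologicalAddGroup V] [ContinuousSMul ℝ V]

lemma auxSt_nonempty {K E : Set V} (hKconv : Convex ℝ K) (hEcl : IsClosed E)
    {w0 : V} (hw0 : w0 ∈ K \ E) {x : V} (hx : x ∈ K) : (auxSt K E w0 x).Nonempty := by
  have hcont : Continuous fun s : ℝ => w0 + s • (x - w0) :=
    continuous_const.add (continuous_id.smul continuous_const)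
  have hmem : (fun s : ℝ => w0 + s • (x - w0)) ⁻¹' Eᶜ ∈ nhds (0 : ℝ) := by
    refine (hEcl.isOpen_compl.preimage hcont).mem_nhds ?_
    simp only [mem_preimage, zero_smul, add_zero]
    exact hw0.2
  obtain ⟨δ, hδ, hball⟩ := Metric.mem_nhds_iff.1 hmem
  set ε : ℝ := min (δ / 2) 1 with hεdef
  have hε0 : 0 < ε := lt_min (by linarith) one_pos
  have hε1 : ε ≤ 1 := min_le_right _ _
  have hεδ : ε < δ := lt_of_le_of_lt (min_le_left _ _) (by linarith)
  have hεE : w0 + ε • (x - w0) ∉ E := by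
    have : ε ∈ Metric.ball (0 : ℝ) δ := by
      simp [Real.norm_eq_abs, abs_of_pos hε0, hεδ]
    exact hball this
  refine ⟨ε⁻¹, ?_, ?_⟩
  · exact (one_le_inv₀ hε0).2 hε1
  · have hinv : (ε⁻¹)⁻¹ = ε := inv_inv ε
    rw [hinv]
    refine ⟨?_, hεE⟩
    have hco : w0 + ε • (x - w0) = (1 - ε) • w0 + ε • x := by
      rw [smul_sub, sub_smul, one_smul]; abel
    rw [hco]
    exact hKconv hw0.1 hx (by linarith) hε0.le (by ring)

lemma auxSt_bddBelow (K E : Set V) (w0 x : V) : BddBelow (auxSt K E w0 x) :=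
  ⟨1, fun _ ht => ht.1⟩

lemma one_le_auxGamma {K E : Set V} (hKconv : Convex ℝ K) (hEcl : IsClosed E)
    {w0 : V} (hw0 : w0 ∈ K \ E) {x : V} (hx : x ∈ K) : 1 ≤ auxGamma K E w0 x :=
  le_csInf (auxSt_nonempty hKconv hEcl hw0 hx) fun _ ht => ht.1

lemma auxGamma_le_one {K E : Set V} {w0 : V} {x : V} (hx : x ∈ K \ E) :
    auxGamma K E w0 x ≤ 1 := by
  refine csInf_le (auxSt_bddBelow K E w0 x) ⟨le_refl 1, ?_⟩
  have : w0 + (1 : ℝ)⁻¹ • (x - w0) = x := by rw [inv_one, one_smul]; abel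
  rw [this]; exact hx

lemma aux_key_identity (w0 x y : V) {a b t1 t2 : ℝ}
    (ha : 0 < a) (hb : 0 < b) (hab : a + b = 1) (h1 : 0 < t1) (h2 : 0 < t2) :
    w0 + (a * t1 + b * t2)⁻¹ • (a • x + b • y - w0) =
      (a * t1 / (a * t1 + b * t2)) • (w0 + t1⁻¹ • (x - w0)) +
      (b * t2 / (a * t1 + b * t2)) • (w0 + t2⁻¹ • (y - w0)) := by
  have htb : (0 : ℝ) < a * t1 + b * t2 := by positivity
  have ha' : a = 1 - b := by linarith
  subst ha'
  match_scalars <;> field_simp <;> ring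

/-- Convexity of the gauge; this is where semi-extremality of `E` (i.e. convexity of
`K \ E`) is used. -/
lemma auxGamma_convex {K E : Set V} (hKconv : Convex ℝ K) (hEcl : IsClosed E)
    (hEse : SemiExtremal K E) {w0 : V} (hw0 : w0 ∈ K \ E) {x y : V} (hx : x ∈ K) (hy : y ∈ K)
    {a b : ℝ} (ha : 0 < a) (hb : 0 < b) (hab : a + b = 1) :
    auxGamma K E w0 (a • x + b • y) ≤ a * auxGamma K E w0 x + b * auxGamma K E w0 y := by
  have hz : a • x + b • y ∈ K := hKconv hx hy ha.le hb.le hab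
  refine le_of_forall_sub_le fun ε hε => ?_
  rw [sub_le_iff_le_add]
  obtain ⟨t1, ht1, ht1lt⟩ := exists_lt_of_csInf_lt (auxSt_nonempty hKconv hEcl hw0 hx)
    (lt_add_of_pos_right (auxGamma K E w0 x) hε)
  obtain ⟨t2, ht2, ht2lt⟩ := exists_lt_of_csInf_lt (auxSt_nonempty hKconv hEcl hw0 hy)
    (lt_add_of_pos_right (auxGamma K E w0 y) hε)
  have h1pos : (0 : ℝ) < t1 := lt_of_lt_of_le one_pos ht1.1
  have h2pos : (0 : ℝ) < t2 := lt_of_lt_of_le one_pos ht2.1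
  have htbpos : (0 : ℝ) < a * t1 + b * t2 := by positivity
  have htbne : a * t1 + b * t2 ≠ 0 := htbpos.ne'
  have htb1 : (1 : ℝ) ≤ a * t1 + b * t2 := by nlinarith [ht1.1, ht2.1]
  have hp1K : w0 + t1⁻¹ • (x - w0) ∈ K \ E := ht1.2
  have hp2K : w0 + t2⁻¹ • (y - w0) ∈ K \ E := ht2.2
  have hμ1pos : 0 < a * t1 / (a * t1 + b * t2) := by positivity
  have hμ2pos : 0 < b * t2 / (a * t1 + b * t2) := by positivity
  have hμsum : a * t1 / (a * t1 + b * t2) + b * t2 / (a * t1 + b * t2) = 1 := by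
    field_simp
  have hkey := aux_key_identity w0 x y ha hb hab h1pos h2pos
  have hmem : a * t1 + b * t2 ∈ auxSt K E w0 (a • x + b • y) := by
    refine ⟨htb1, ?_, ?_⟩
    · rw [hkey]
      exact hKconv hp1K.1 hp2K.1 hμ1pos.le hμ2pos.le hμsum
    · rw [hkey]
      by_cases hpp : w0 + t1⁻¹ • (x - w0) = w0 + t2⁻¹ • (y - w0)
      · rw [hpp, ← add_smul, hμsum, one_smul]
        exact hp2K.2
      · intro hmemE
        rcases hEse hp1K.1 hp2K.1 hpp ⟨_,
          ⟨a * t1 / (a * t1 + b * t2), b * t2 / (a * t1 + b * t2),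
            hμ1pos, hμ2pos, hμsum, rfl⟩, hmemE⟩ with h | h
        exacts [hp1K.2 h, hp2K.2 h]
  have h1 : auxGamma K E w0 (a • x + b • y) ≤ a * t1 + b * t2 :=
    csInf_le (auxSt_bddBelow K E w0 _) hmem
  have h2 : a * t1 ≤ a * (auxGamma K E w0 x + ε) := by nlinarith
  have h3 : b * t2 ≤ b * (auxGamma K E w0 y + ε) := by nlinarith
  nlinarith [h1]

lemma auxGamma_superlevel_closed [T2Space V] {K E : Set V} (hKc : IsCompact K) (hKconv : Convex ℝ K)
    (hEcl : IsClosed E) {w0 : V} (hw0 : w0 ∈ K \ E) (c : ℝ) :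
    IsClosed {x | x ∈ K ∧ c ≤ auxGamma K E w0 x} := by
  classical
  set O : Set V := ⋃ (t : ℝ) (_ : 1 ≤ t ∧ t < c), (fun x => w0 + t⁻¹ • (x - w0)) ⁻¹' Eᶜ with hO
  have hOopen : IsOpen O := by
    refine isOpen_iUnion fun t => isOpen_iUnion fun _ => hEcl.isOpen_compl.preimage ?_
    exact continuous_const.add ((continuous_id.sub continuous_const).const_smul _)
  have hset : {x | x ∈ K ∧ c ≤ auxGamma K E w0 x} = K ∩ Oᶜ := by
    ext x
    constructor
    · rintro ⟨hxK, hge⟩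
      refine ⟨hxK, fun hmem => ?_⟩
      rw [hO, mem_iUnion] at hmem
      obtain ⟨t, hmem⟩ := hmem
      rw [mem_iUnion] at hmem
      obtain ⟨⟨ht1, htc⟩, hpre⟩ := hmem
      have htpos : (0 : ℝ) < t := lt_of_lt_of_le one_pos ht1
      have htinv1 : t⁻¹ ≤ 1 := by
        rw [← one_div]; exact (div_le_one htpos).2 ht1
      have hmemSt : t ∈ auxSt K E w0 x := by
        refine ⟨ht1, ?_, hpre⟩
        rw [aux_combo_eq]
        exact hKconv hw0.1 hxK (by linarith) (inv_nonneg.2 htpos.le) (by ring)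
      have : auxGamma K E w0 x ≤ t := csInf_le (auxSt_bddBelow K E w0 x) hmemSt
      linarith
    · rintro ⟨hxK, hnot⟩
      refine ⟨hxK, ?_⟩
      by_contra hlt
      push_neg at hlt
      obtain ⟨t, htmem, htlt⟩ :=
        exists_lt_of_csInf_lt (auxSt_nonempty hKconv hEcl hw0 hxK) hlt
      refine hnot ?_
      rw [hO, mem_iUnion]
      refine ⟨t, ?_⟩
      rw [mem_iUnion]
      exact ⟨⟨htmem.1, htlt⟩, htmem.2.2⟩
  rw [hset]
  exact hKc.isClosed.inter hOopen.isClosed_compl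

end Gauge

theorem semiExtremal_contains_extremePoint
    {V : Type*} [AddCommGroup V] [Module ℝ V] [TopologicalSpace V]
    [IsTopologicalAddGroup V] [ContinuousSMul ℝ V] [T2Space V]
    [LocallyConvexSpace ℝ V]
    (K : Set V) (hKne : K.Nonempty) (hKc : IsCompact K) (hKconv : Convex ℝ K)
    (E : Set V) (hEK : E ⊆ K) (hEne : E.Nonempty) (hEcl : IsClosed E)
    (hEse : SemiExtremal K E) :
    (E ∩ Set.extremePoints ℝ K).Nonempty := by
  classical
  by_cases hcase : ∃ w ∈ K \ E, ∃ x ∈ K, (openSegment ℝ w x ∩ E).Nonempty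
  · -- Case 2: some open segment from a point of `K \ E` meets `E`.
    obtain ⟨w0, hw0, x0, hx0, q, hqseg, hqE⟩ := hcase
    obtain ⟨a, b, ha, hb, hab, hq⟩ := hqseg
    -- every point of the segment from `q` to `x0` is in `E`
    have Tcl : ∀ s : ℝ, b ≤ s → s ≤ 1 → (1 - s) • w0 + s • x0 ∈ E := by
      intro s hbs hs1
      rcases eq_or_lt_of_le hbs with heq | hlt
      · rw [← heq]
        have hba : (1 : ℝ) - b = a := by linarith
        rw [hba, hq]
        exact hqE
      · have hspos : 0 < s := lt_trans hb hlt
        set p : V := (1 - s) • w0 + s • x0 with hp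
        have hpK : p ∈ K := hKconv hw0.1 hx0 (by linarith) hspos.le (by ring)
        have hwp : w0 ≠ p := by
          intro hwp
          have hxw : x0 = w0 := by
            have h0 : s • (x0 - w0) = 0 := by
              have := hwp
              rw [hp] at this
              have : (1 - s) • w0 + s • x0 - w0 = 0 := by rw [← this]; abel
              rw [← this]; rw [smul_sub]; module
            rcases smul_eq_zero.1 h0 with h | h
            · exact absurd h hspos.ne'
            · exact (sub_eq_zero.1 h)
          have : q = w0 := by
            rw [← hq, hxw, ← add_smul, hab, one_smul]
          exact absurd (this ▸ hqE) hw0.2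
        have hqmem : q ∈ openSegment ℝ w0 p := by
          refine ⟨1 - b / s, b / s, ?_, div_pos hb hspos, by ring, ?_⟩
          · have : b / s < 1 := (div_lt_one hspos).2 hlt
            linarith
          · show (1 - b / s) • w0 + (b / s) • p = q
            rw [hp, ← hq]
            have ha' : a = 1 - b := by linarith
            subst ha'
            have hs0 : s ≠ 0 := hspos.ne'
            match_scalars <;> field_simp <;> ring
        rcases hEse hw0.1 hpK hwp ⟨q, hqmem, hqE⟩ with h | h
        · exact absurd h hw0.2
        · exact h
    -- the gauge of `x0` is at least `b⁻¹ > 1`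
    have hb1 : b < 1 := by linarith
    have hbinv : 1 < b⁻¹ := (one_lt_inv₀ hb).2 hb1
    have hγx0 : b⁻¹ ≤ auxGamma K E w0 x0 := by
      refine le_csInf (auxSt_nonempty hKconv hEcl hw0 hx0) fun t ht => ?_
      by_contra hlt
      push_neg at hlt
      have htpos : (0 : ℝ) < t := lt_of_lt_of_le one_pos ht.1
      have hbt : b ≤ t⁻¹ := by
        rw [le_inv_comm₀ hb htpos]
        exact hlt.le
      have ht1 : t⁻¹ ≤ 1 := by
        rw [← one_div]; exact (div_le_one htpos).2 ht.1
      have := Tcl t⁻¹ hbt ht1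
      rw [← aux_combo_eq] at this
      exact ht.2.2 this
    -- the argmax set of the gauge
    have himgne : (auxGamma K E w0 '' K).Nonempty := ⟨_, ⟨x0, hx0, rfl⟩⟩
    have hbdd : BddAbove (auxGamma K E w0 '' K) := by
      by_contra hnb
      rw [not_bddAbove_iff] at hnb
      have hDne : ∀ n : ℕ, {x | x ∈ K ∧ (n : ℝ) ≤ auxGamma K E w0 x}.Nonempty := by
        intro n
        obtain ⟨y, ⟨x, hx, rfl⟩, hy⟩ := hnb n
        exact ⟨x, hx, hy.le⟩
      have hDcl : ∀ n : ℕ, IsClosed {x | x ∈ K ∧ (n : ℝ) ≤ auxGamma K E w0 x} := fun n =>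
        auxGamma_superlevel_closed hKc hKconv hEcl hw0 _
      have hDcomp : ∀ n : ℕ, IsCompact {x | x ∈ K ∧ (n : ℝ) ≤ auxGamma K E w0 x} := fun n =>
        hKc.of_isClosed_subset (hDcl n) (fun x hx => hx.1)
      have hdir : Directed (· ⊇ ·) fun n : ℕ => {x | x ∈ K ∧ (n : ℝ) ≤ auxGamma K E w0 x} := by
        intro m n
        refine ⟨max m n, fun x hx => ⟨hx.1, le_trans (Nat.cast_le.2 (le_max_left m n)) hx.2⟩,
          fun x hx => ⟨hx.1, le_trans (Nat.cast_le.2 (le_max_right m n)) hx.2⟩⟩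
      obtain ⟨x, hx⟩ := IsCompact.nonempty_iInter_of_directed_nonempty_isCompact_isClosed
        _ hdir hDne hDcomp hDcl
      simp only [mem_iInter] at hx
      obtain ⟨n, hn⟩ := exists_nat_gt (auxGamma K E w0 x)
      exact absurd (hx n).2 (not_le.2 hn)
    set M : ℝ := sSup (auxGamma K E w0 '' K) with hM
    have hMge : ∀ x ∈ K, auxGamma K E w0 x ≤ M := fun x hx =>
      le_csSup hbdd ⟨x, hx, rfl⟩
    have hM1 : 1 < M := lt_of_lt_of_le hbinv (le_trans hγx0 (hMge x0 hx0))
    -- the argmax set A is nonempty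
    have hCne : ∀ n : ℕ, {x | x ∈ K ∧ M - 1 / (n + 1) ≤ auxGamma K E w0 x}.Nonempty := by
      intro n
      have hpos : (0 : ℝ) < 1 / (n + 1) := by positivity
      obtain ⟨y, ⟨x, hx, rfl⟩, hy⟩ := exists_lt_of_lt_csSup himgne
        (sub_lt_self M hpos)
      exact ⟨x, hx, hy.le⟩
    have hCcl : ∀ n : ℕ, IsClosed {x | x ∈ K ∧ M - 1 / (n + 1) ≤ auxGamma K E w0 x} := fun n =>
      auxGamma_superlevel_closed hKc hKconv hEcl hw0 _
    have hCcomp : ∀ n : ℕ, IsCompact {x | x ∈ K ∧ M - 1 / (n + 1) ≤ auxGamma K E w0 x} :=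
      fun n => hKc.of_isClosed_subset (hCcl n) (fun x hx => hx.1)
    have hCdir : Directed (· ⊇ ·)
        fun n : ℕ => {x | x ∈ K ∧ M - 1 / (n + 1) ≤ auxGamma K E w0 x} := by
      intro m n
      refine ⟨max m n, fun x hx => ⟨hx.1, le_trans (by
        have : (1 : ℝ) / (max m n + 1) ≤ 1 / (m + 1) := by
          apply one_div_le_one_div_of_le (by positivity)
          have : (m : ℝ) ≤ max m n := Nat.cast_le.2 (le_max_left m n)
          linarith
        linarith) hx.2⟩,
        fun x hx => ⟨hx.1, le_trans (by
        have : (1 : ℝ) / (max m n + 1) ≤ 1 / (n + 1) := by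
          apply one_div_le_one_div_of_le (by positivity)
          have : (n : ℝ) ≤ max m n := Nat.cast_le.2 (le_max_right m n)
          linarith
        linarith) hx.2⟩⟩
    obtain ⟨xm, hxm⟩ := IsCompact.nonempty_iInter_of_directed_nonempty_isCompact_isClosed
      _ hCdir hCne hCcomp hCcl
    simp only [mem_iInter] at hxm
    have hxmK : xm ∈ K := (hxm 0).1
    have hxmM : M ≤ auxGamma K E w0 xm := by
      refine le_of_forall_sub_le fun ε hε => ?_
      obtain ⟨n, hn⟩ := exists_nat_one_div_lt hε
      have := (hxm n).2
      linarith
    set A : Set V := {x | x ∈ K ∧ M ≤ auxGamma K E w0 x} with hA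
    have hAne : A.Nonempty := ⟨xm, hxmK, hxmM⟩
    have hAcl : IsClosed A := auxGamma_superlevel_closed hKc hKconv hEcl hw0 M
    have hAE : A ⊆ E := by
      rintro x ⟨hxK, hxM⟩
      by_contra hxE
      have := auxGamma_le_one (K := K) (E := E) (w0 := w0) ⟨hxK, hxE⟩
      linarith
    have hAex : IsExtreme ℝ K A := by
      constructor
      · exact fun x hx => hx.1
      · rintro x hx y hy z hzA ⟨a', b', ha', hb', hab', hz⟩
        have hγz : auxGamma K E w0 z ≤ a' * auxGamma K E w0 x + b' * auxGamma K E w0 y := by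
          rw [← hz]
          exact auxGamma_convex hKconv hEcl hEse hw0 hx hy ha' hb' hab'
        have hxle : auxGamma K E w0 x ≤ M := hMge x hx
        have hyle : auxGamma K E w0 y ≤ M := hMge y hy
        have hzge : M ≤ auxGamma K E w0 z := hzA.2
        refine (?_ : x ∈ A ∧ y ∈ A).1
        constructor
        · refine ⟨hx, ?_⟩
          by_contra hxM
          push_neg at hxM
          nlinarith
        · refine ⟨hy, ?_⟩
          by_contra hyM
          push_neg at hyM
          nlinarith
    obtain ⟨e, heA, heExt⟩ := aux_extreme_subset_has_extremePoint hKc hAne hAcl hAex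
    exact ⟨e, hAE heA, heExt⟩
  · -- Case 1: no open segment from `K \ E` meets `E`; then `E` is an extreme subset.
    push_neg at hcase
    have hEex : IsExtreme ℝ K E := by
      constructor
      · exact hEK
      · rintro x hx y hy z hzE hzseg
        refine (?_ : x ∈ E ∧ y ∈ E).1
        constructor
        · by_contra hxE
          exact absurd (hcase x ⟨hx, hxE⟩ y hy) (Set.Nonempty.ne_empty ⟨z, hzseg, hzE⟩)
        · by_contra hyE
          rw [openSegment_symm] at hzseg
          exact absurd (hcase y ⟨hy, hyE⟩ x hx) (Set.Nonempty.ne_empty ⟨z, hzseg, hzE⟩)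
    exact aux_extreme_subset_has_extremePoint hKc hEne hEcl hEex
end

section
/- Let K be a set in a real vector space and f : K → ℝ explicitly quasiconvex, attaining its maximum M over K. Then the set E of maximizers of f is K-extremal: for any distinct x, y ∈ K with the open segment (x,y) meeting E (and contained in K), both x and y lie in E. -/
theorem eq_and_eq_of_le_max_of_lt_max {α : Type*} [LinearOrder α] {a b c : α}
    (hle : c ≤ max a b) (hlt : a ≠ b → c < max a b) (ha : a ≤ c) (hb : b ≤ c) :
    a = c ∧ b = c := by
  have hmax : max a b = c := le_antisymm (max_le ha hb) hle
  have hab : a = b := by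
    by_contra hab
    exact (hlt hab).ne' hmax
  subst hab
  exact ⟨by simpa using hmax, by simpa using hmax⟩

theorem exists_mem_Ioo_of_mem_openSegment {V : Type*} [AddCommGroup V] [Module ℝ V]
    {x y z : V} (hz : z ∈ openSegment ℝ x y) :
    ∃ l ∈ Set.Ioo (0 : ℝ) 1, l • x + (1 - l) • y = z := by
  obtain ⟨a, b, ha, hb, hab, rfl⟩ := hz
  exact ⟨a, ⟨ha, by linarith⟩, by rw [← hab, add_sub_cancel_left]⟩

theorem maximizers_extremal_of_explicitly_quasiconvex_general
    {V : Type*} [AddCommGroup V] [Module ℝ V]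
    (K : Set V) (f : V → ℝ) (M : ℝ)
    (heqc : ∀ ⦃x⦄, x ∈ K → ∀ ⦃y⦄, y ∈ K → x ≠ y → ∀ ⦃l : ℝ⦄, l ∈ Set.Ioo (0:ℝ) 1 →
      l • x + (1 - l) • y ∈ K →
      f (l • x + (1 - l) • y) ≤ max (f x) (f y) ∧
        (f x ≠ f y → f (l • x + (1 - l) • y) < max (f x) (f y)))
    (hub : ∀ x ∈ K, f x ≤ M) :
    ∀ ⦃x⦄, x ∈ K → ∀ ⦃y⦄, y ∈ K → x ≠ y → openSegment ℝ x y ⊆ K →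
      (openSegment ℝ x y ∩ {x ∈ K | f x = M}).Nonempty →
      x ∈ {x ∈ K | f x = M} ∧ y ∈ {x ∈ K | f x = M} := by
  rintro x hx y hy hxy - ⟨z, hz, hzK, hzM⟩
  obtain ⟨l, hl, rfl⟩ := exists_mem_Ioo_of_mem_openSegment hz
  obtain ⟨hle, hlt⟩ := heqc hx hy hxy hl hzK
  rw [hzM] at hle hlt
  obtain ⟨hfx, hfy⟩ := eq_and_eq_of_le_max_of_lt_max hle hlt (hub x hx) (hub y hy)
  exact ⟨⟨hx, hfx⟩, ⟨hy, hfy⟩⟩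

theorem maximizers_extremal_of_explicitly_quasiconvex
    {V : Type*} [AddCommGroup V] [Module ℝ V]
    (K : Set V) (f : V → ℝ) (M : ℝ)
    (heqc : ∀ ⦃x⦄, x ∈ K → ∀ ⦃y⦄, y ∈ K → x ≠ y → ∀ ⦃l : ℝ⦄, l ∈ Set.Ioo (0:ℝ) 1 →
      l • x + (1 - l) • y ∈ K →
      f (l • x + (1 - l) • y) ≤ max (f x) (f y) ∧
        (f x ≠ f y → f (l • x + (1 - l) • y) < max (f x) (f y)))
    (hub : ∀ x ∈ K, f x ≤ M) (hatt : ∃ x ∈ K, f x = M) :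
    ∀ ⦃x⦄, x ∈ K → ∀ ⦃y⦄, y ∈ K → x ≠ y → openSegment ℝ x y ⊆ K →
      (openSegment ℝ x y ∩ {x ∈ K | f x = M}).Nonempty →
      x ∈ {x ∈ K | f x = M} ∧ y ∈ {x ∈ K | f x = M} :=
  maximizers_extremal_of_explicitly_quasiconvex_general K f M heqc hub
end

section
/- Let K be a nonempty compact convex subset of a Hausdorff locally convex space and let E ⊆ K be closed, K-semi-extremal, and minimal among nonempty closed K-semi-extremal subsets of K (with respect to inclusion). Then E is a singleton whose unique element is an extreme point of K. -/
theorem minimal_semiExtremal_singleton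
    {V : Type*} [AddCommGroup V] [Module ℝ V] [TopologicalSpace V]
    [IsTopologicalAddGroup V] [ContinuousSMul ℝ V] [T2Space V]
    [LocallyConvexSpace ℝ V]
    (K : Set V) (hKne : K.Nonempty) (hKc : IsCompact K) (hKconv : Convex ℝ K)
    (E : Set V) (hEK : E ⊆ K) (hEne : E.Nonempty) (hEcl : IsClosed E)
    (hEse : SemiExtremal K E)
    (hmin : ∀ A : Set V, A ⊆ E → A.Nonempty → IsClosed A → SemiExtremal K A → A = E) :
    ∃ p, E = {p} ∧ p ∈ Set.extremePoints ℝ K := by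
  have hEcomp : IsCompact E := hKc.of_isClosed_subset hEcl hEK
  -- The complement of `E` in `K` is "convex": a convex combination of two
  -- points of `K \ E` is never in `E`.
  have hD : ∀ ⦃x⦄, x ∈ K → x ∉ E → ∀ ⦃y⦄, y ∈ K → y ∉ E → ∀ ⦃a b : ℝ⦄,
      0 < a → 0 < b → a + b = 1 → a • x + b • y ∉ E := by
    intro x hx hxE y hy hyE a b ha hb hab hmem
    by_cases hxy : x = y
    · subst hxy
      have hxx : a • x + b • x = x := by rw [← add_smul, hab, one_smul]
      rw [hxx] at hmem
      exact hxE hmem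
    · rcases hEse hx hy hxy ⟨a • x + b • y, ⟨a, b, ha, hb, hab, rfl⟩, hmem⟩ with h | h
      · exact hxE h
      · exact hyE h
  -- Key lemma: the open segment from a point of `K \ E` to a point of `E`
  -- does not meet `E`.
  have key : ∀ ⦃p⦄, p ∈ K → p ∉ E → ∀ ⦃t : ℝ⦄, 0 < t → t < 1 → ∀ ⦃e⦄, e ∈ E →
      (1 - t) • p + t • e ∉ E := by
    intro p hpK hpE t ht0 ht1 e heE hcon
    have h1t : (0:ℝ) ≤ 1 - t := by linarith
    have h1t' : (0:ℝ) < 1 - t := by linarith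
    have hsum : (1 - t) + t = 1 := by ring
    set h : V → V := fun x => (1 - t) • p + t • x with hh
    have hcont : Continuous h := by
      exact (continuous_const.add (continuous_id.const_smul t))
    set A : Set V := E ∩ h ⁻¹' E with hA
    have hAsub : A ⊆ E := Set.inter_subset_left
    have hAne : A.Nonempty := ⟨e, heE, hcon⟩
    have hAcl : IsClosed A := hEcl.inter (hEcl.preimage hcont)
    have hAse : SemiExtremal K A := by
      intro x hx y hy hxy hmem
      obtain ⟨w, hwseg, hwE, hwh⟩ := hmem
      have h1 : x ∈ E ∨ y ∈ E := hEse hx hy hxy ⟨w, hwseg, hwE⟩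
      obtain ⟨a, b, ha, hb, hab, hwdef⟩ := hwseg
      have hb' : b = 1 - a := by linarith
      subst hb'
      have hxK' : h x ∈ K := hKconv hpK hx h1t ht0.le hsum
      have hyK' : h y ∈ K := hKconv hpK hy h1t ht0.le hsum
      have hne' : h x ≠ h y := by
        intro hcontra
        apply hxy
        have h3 : t • x = t • y := by
          have := hcontra
          simp only [hh] at this
          exact add_left_cancel this
        calc x = t⁻¹ • (t • x) := by rw [smul_smul, inv_mul_cancel₀ ht0.ne', one_smul]
        _ = t⁻¹ • (t • y) := by rw [h3]
        _ = y := by rw [smul_smul, inv_mul_cancel₀ ht0.ne', one_smul]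
      have halg : a • h x + (1 - a) • h y = h w := by
        simp only [hh]
        rw [← hwdef]
        module
      have h2 : h x ∈ E ∨ h y ∈ E :=
        hEse hxK' hyK' hne' ⟨h w, ⟨a, 1 - a, ha, hb, by ring, halg⟩, hwh⟩
      by_cases hxE : x ∈ E
      · by_cases hyE : y ∈ E
        · rcases h2 with h2 | h2
          · exact Or.inl ⟨hxE, h2⟩
          · exact Or.inr ⟨hyE, h2⟩
        · have hhy : h y ∉ E := hD hpK hpE hy hyE h1t' ht0 hsum
          rcases h2 with h2 | h2
          · exact Or.inl ⟨hxE, h2⟩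
          · exact absurd h2 hhy
      · have hyE : y ∈ E := h1.resolve_left hxE
        have hhx : h x ∉ E := hD hpK hpE hx hxE h1t' ht0 hsum
        rcases h2 with h2 | h2
        · exact absurd h2 hhx
        · exact Or.inr ⟨hyE, h2⟩
    have hAE : A = E := hmin A hAsub hAne hAcl hAse
    have hstep : ∀ x ∈ E, h x ∈ E := by
      intro x hx
      have : x ∈ A := hAE.symm ▸ hx
      exact this.2
    have hiter : ∀ n : ℕ, (1 - t ^ n) • p + t ^ n • e ∈ E := by
      intro n
      induction n with
      | zero => simpa using heE
      | succ n ih =>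
        have hnext := hstep _ ih
        have halg2 : h ((1 - t ^ n) • p + t ^ n • e)
            = (1 - t ^ (n + 1)) • p + t ^ (n + 1) • e := by
          simp only [hh, pow_succ]
          module
        rwa [halg2] at hnext
    have hpow : Filter.Tendsto (fun n : ℕ => t ^ n) Filter.atTop (nhds 0) :=
      tendsto_pow_atTop_nhds_zero_of_lt_one ht0.le ht1
    have hlim : Filter.Tendsto (fun n : ℕ => (1 - t ^ n) • p + t ^ n • e)
        Filter.atTop (nhds p) := by
      have h1 : Filter.Tendsto (fun n : ℕ => (1 - t ^ n) • p + t ^ n • e)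
          Filter.atTop (nhds ((1 - (0:ℝ)) • p + (0:ℝ) • e)) :=
        ((Filter.Tendsto.sub tendsto_const_nhds hpow).smul_const p).add (hpow.smul_const e)
      simpa using h1
    exact hpE (hEcl.mem_of_tendsto hlim (Filter.Eventually.of_forall hiter))
  -- `E` is a face of `K`.
  have hface : ∀ ⦃x⦄, x ∈ K → ∀ ⦃y⦄, y ∈ K → ∀ ⦃e⦄, e ∈ E →
      e ∈ openSegment ℝ x y → x ∈ E ∧ y ∈ E := by
    intro x hx y hy e heE heseg
    obtain ⟨a, b, ha, hb, hab, hedef⟩ := heseg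
    have hb' : b = 1 - a := by linarith
    subst hb'
    by_cases hxy : x = y
    · subst hxy
      have hxx : a • x + (1 - a) • x = x := by rw [← add_smul]; simp
      rw [hxx] at hedef
      subst hedef
      exact ⟨heE, heE⟩
    · rcases hEse hx hy hxy ⟨e, ⟨a, 1 - a, ha, hb, by ring, hedef⟩, heE⟩ with hxE | hyE
      · refine ⟨hxE, ?_⟩
        by_contra hyE
        have hkey : (1 - a) • y + a • x ∉ E := key hy hyE ha (by linarith) hxE
        apply hkey
        have : (1 - a) • y + a • x = e := by rw [← hedef]; module
        rwa [this]
      · refine ⟨?_, hyE⟩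
        by_contra hxE
        have hkey : (1 - (1 - a)) • x + (1 - a) • y ∉ E :=
          key hx hxE hb (by linarith) hyE
        apply hkey
        have : (1 - (1 - a)) • x + (1 - a) • y = e := by rw [← hedef]; module
        rwa [this]
  -- Every continuous linear functional is constant on `E`.
  have hconst : ∀ f : V →L[ℝ] ℝ, ∀ x ∈ E, ∀ y ∈ E, f x = f y := by
    intro f x hx y hy
    obtain ⟨m, hmE, hmax⟩ := hEcomp.exists_isMaxOn hEne f.continuous.continuousOn
    set A : Set V := E ∩ f ⁻¹' {f m} with hA
    have hAsub : A ⊆ E := Set.inter_subset_left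
    have hAne : A.Nonempty := ⟨m, hmE, rfl⟩
    have hAcl : IsClosed A := hEcl.inter (isClosed_singleton.preimage f.continuous)
    have hAse : SemiExtremal K A := by
      intro u hu v hv huv hmem
      obtain ⟨w, hwseg, hwE, hwf⟩ := hmem
      obtain ⟨huE, hvE⟩ := hface hu hv hwE hwseg
      obtain ⟨a, b, ha, hb, hab, hwdef⟩ := hwseg
      have hwval : f w = a * f u + b * f v := by
        rw [← hwdef]
        simp [map_add, map_smul, smul_eq_mul]
      have h1 : f u ≤ f m := hmax huE
      have h2 : f v ≤ f m := hmax hvE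
      have hfw : f w = f m := hwf
      have heq : f u = f m := by
        by_contra hne
        have hlt : f u < f m := lt_of_le_of_ne h1 hne
        have c1 : a * f u < a * f m := by exact (mul_lt_mul_iff_right₀ ha).mpr hlt
        have c2 : b * f v ≤ b * f m := by exact mul_le_mul_of_nonneg_left h2 hb.le
        have : f w < f m := by
          rw [hwval]
          calc a * f u + b * f v < a * f m + b * f m := by linarith
          _ = f m := by rw [← add_mul, hab, one_mul]
        linarith [hfw ▸ this]
      exact Or.inl ⟨huE, heq⟩
    have hAE : A = E := hmin A hAsub hAne hAcl hAse
    have hx' : x ∈ A := hAE.symm ▸ hx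
    have hy' : y ∈ A := hAE.symm ▸ hy
    have : f x = f m := hx'.2
    have : f y = f m := hy'.2
    rw [hx'.2, hy'.2]
  obtain ⟨p₀, hp₀⟩ := hEne
  have hsingle : E = {p₀} := by
    apply Set.eq_singleton_iff_unique_mem.mpr
    refine ⟨hp₀, fun x hx => ?_⟩
    by_contra hne
    obtain ⟨f, hf⟩ := geometric_hahn_banach_point_point hne
    have := hconst f x hx p₀ hp₀
    rw [this] at hf
    exact lt_irrefl _ hf
  refine ⟨p₀, hsingle, ?_⟩
  refine ⟨hEK hp₀, ?_⟩
  intro x hx y hy hseg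
  have hxy := hface hx hy hp₀ hseg
  rw [hsingle] at hxy
  exact hxy.1
end
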